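/- arXiv:1501.04400 — 2 statements merged into one kernel-verified Lean document; each statement's English description precedes it below -/
import Mathlib

section
/- Let E be a module over L⁰ = L⁰(𝔉,ℝ), let 𝒫 be a finite family of L⁰-seminorms on E and ε ∈ L⁰₊₊, and set U = {x ∈ E : p(x) ≤ ε for all p ∈ 𝒫}. If g : E → L⁰₊ satisfies that g(x) is the greatest lower bound in (L⁰, ≤) of {ξ ∈ L⁰₊ : x ∈ ξU} for every x ∈ E (i.e., g = p_U is the random gauge function of U), then {x ∈ E : g(x) ≤ 1} = U. -/
noncomputable section

open MeasureTheory Set Pointwise Filter Topology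

namespace PaperL0

variable {Ω : Type*} [MeasurableSpace Ω]

instance commRingL0 (μ : Measure Ω) : CommRing (Ω →ₘ[μ] ℝ) :=
  { (inferInstance : AddCommGroup (Ω →ₘ[μ] ℝ)),
    (inferInstance : CommMonoid (Ω →ₘ[μ] ℝ)) with
    left_distrib := fun f g h => MeasureTheory.AEEqFun.toGerm_injective <| by
      simp [MeasureTheory.AEEqFun.mul_toGerm, MeasureTheory.AEEqFun.add_toGerm, mul_add]
    right_distrib := fun f g h => MeasureTheory.AEEqFun.toGerm_injective <| by
      simp [MeasureTheory.AEEqFun.mul_toGerm, MeasureTheory.AEEqFun.add_toGerm, add_mul]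
    zero_mul := fun f => MeasureTheory.AEEqFun.toGerm_injective <| by
      simp [MeasureTheory.AEEqFun.mul_toGerm, MeasureTheory.AEEqFun.zero_toGerm]
    mul_zero := fun f => MeasureTheory.AEEqFun.toGerm_injective <| by
      simp [MeasureTheory.AEEqFun.mul_toGerm, MeasureTheory.AEEqFun.zero_toGerm] }

variable (μ : Measure Ω)

/-- `L⁰₊`, the set of nonnegative elements of `L⁰`. -/
def Lpos : Set (Ω →ₘ[μ] ℝ) := {ξ | 0 ≤ ξ}

/-- `L⁰₊₊`, the set of elements of `L⁰` which are `> 0` a.e. on `Ω`. -/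
def Lspos : Set (Ω →ₘ[μ] ℝ) := {ξ | ∀ᵐ ω ∂μ, 0 < ξ ω}

/-- The absolute value `|ξ|` of an element of `L⁰`. -/
def aabs {μ : Measure Ω} (ξ : Ω →ₘ[μ] ℝ) : Ω →ₘ[μ] ℝ := ξ ⊔ -ξ

/-- `B_ε = {ξ ∈ L⁰ : |ξ| ≤ ε}`. -/
def ball (ε : Ω →ₘ[μ] ℝ) : Set (Ω →ₘ[μ] ℝ) := {ξ | aabs ξ ≤ ε}

open Classical in
/-- `Ĩ_A`, the equivalence class of the indicator function of a (measurable) set `A`. -/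
def ind (A : Set Ω) : Ω →ₘ[μ] ℝ :=
  if h : MeasurableSet A then
    AEEqFun.mk (A.indicator fun _ => (1 : ℝ))
      ((measurable_const.indicator h).aestronglyMeasurable)
  else 0

/-- A countable measurable partition of `Ω`. -/
def IsMeasPartition (A : ℕ → Set Ω) : Prop :=
  (∀ n, MeasurableSet (A n)) ∧ Pairwise (Function.onFun Disjoint A) ∧ (⋃ n, A n) = Set.univ

variable {E : Type*} [AddCommGroup E] [Module (Ω →ₘ[μ] ℝ) E]

/-- `L⁰`-convexity of a subset of an `L⁰`-module. -/
def IsL0Convex (U : Set E) : Prop :=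
  ∀ x ∈ U, ∀ y ∈ U, ∀ ξ : Ω →ₘ[μ] ℝ, 0 ≤ ξ → ξ ≤ 1 → ξ • x + (1 - ξ) • y ∈ U

/-- `L⁰`-absorbency of a subset of an `L⁰`-module. -/
def IsL0Absorbent (U : Set E) : Prop := ∀ x : E, ∃ ξ ∈ Lspos μ, x ∈ ξ • U

/-- `L⁰`-balancedness of a subset of an `L⁰`-module. -/
def IsL0Balanced (U : Set E) : Prop :=
  ∀ x ∈ U, ∀ ξ : Ω →ₘ[μ] ℝ, aabs ξ ≤ 1 → ξ • x ∈ U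

/-- An `L⁰`-seminorm on an `L⁰`-module. -/
structure IsL0Seminorm (p : E → Ω →ₘ[μ] ℝ) : Prop where
  nonneg : ∀ x, 0 ≤ p x
  homog : ∀ (ξ : Ω →ₘ[μ] ℝ) (x : E), p (ξ • x) = aabs ξ * p x
  triangle : ∀ x y, p (x + y) ≤ p x + p y

/-- The countable concatenation property for a subset of an `L⁰`-module. -/
def HasCCP (G : Set E) : Prop :=
  ∀ x : ℕ → E, (∀ n, x n ∈ G) → ∀ A : ℕ → Set Ω, IsMeasPartition A →
    (∃ y : E, ∀ n, ind μ (A n) • y = ind μ (A n) • x n) ∧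
      ∀ y : E, (∀ n, ind μ (A n) • y = ind μ (A n) • x n) → y ∈ G

/-- The relative countable concatenation property for a subset of an `L⁰`-module. -/
def HasRelCCP (G : Set E) : Prop :=
  ∀ x : ℕ → E, (∀ n, x n ∈ G) → ∀ A : ℕ → Set Ω, IsMeasPartition A →
    ∀ y : E, (∀ n, ind μ (A n) • y = ind μ (A n) • x n) → y ∈ G

/-- A `P`-atom of a measure. -/
def IsPAtom (A : Set Ω) : Prop :=
  MeasurableSet A ∧ 0 < μ A ∧ ∀ B, MeasurableSet B → B ⊆ A → μ B = 0 ∨ μ B = μ A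

end PaperL0

open PaperL0

/-! If `x = ξ • u` with `ξ ≥ 0` and `u ∈ U`, then `p x = ξ * p u ≤ ξ * ε` for every `p ∈ Ps`, so
`p x * ε⁻¹` is a lower bound of `{ξ ∈ L⁰₊ : x ∈ ξ • U}` and hence lies below its infimum `g x`;
`g x ≤ 1` then gives `p x ≤ ε`. Conversely `1` belongs to that set when `x ∈ U`. -/

theorem mul_le_iff_le_mul_of_mul_eq_one {R : Type*} [CommSemiring R] [PartialOrder R]
    [IsOrderedRing R] {e e' a b : R} (he : 0 ≤ e) (he' : 0 ≤ e') (h : e * e' = 1) :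
    a * e' ≤ b ↔ a ≤ b * e := by
  constructor
  · intro hab
    calc a = a * e' * e := by rw [mul_assoc, mul_comm e', h, mul_one]
      _ ≤ b * e := mul_le_mul_of_nonneg_right hab he
  · intro hab
    calc a * e' ≤ b * e * e' := mul_le_mul_of_nonneg_right hab he'
      _ = b := by rw [mul_assoc, h, mul_one]

namespace PaperL0

variable {Ω : Type*} [MeasurableSpace Ω] {μ : Measure Ω}

theorem nonneg_iff_ae_nonneg {ξ : Ω →ₘ[μ] ℝ} : 0 ≤ ξ ↔ ∀ᵐ ω ∂μ, 0 ≤ ξ ω := by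
  rw [← AEEqFun.coeFn_le]
  refine eventually_congr ?_
  filter_upwards [AEEqFun.coeFn_zero (μ := μ) (β := ℝ)] with ω h0
  rw [h0, Pi.zero_apply]

instance : IsOrderedAddMonoid (Ω →ₘ[μ] ℝ) where
  add_le_add_left a b hab c := by
    rw [← AEEqFun.coeFn_le] at hab ⊢
    filter_upwards [hab, AEEqFun.coeFn_add a c, AEEqFun.coeFn_add b c] with ω h hac hbc
    simpa [hac, hbc] using h

instance : ZeroLEOneClass (Ω →ₘ[μ] ℝ) where
  zero_le_one := nonneg_iff_ae_nonneg.2 <| by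
    filter_upwards [AEEqFun.coeFn_one (μ := μ) (β := ℝ)] with ω h1
    simp [h1]

instance : IsOrderedRing (Ω →ₘ[μ] ℝ) :=
  IsOrderedRing.of_mul_nonneg fun a b ha hb => by
    rw [nonneg_iff_ae_nonneg] at ha hb ⊢
    filter_upwards [ha, hb, AEEqFun.coeFn_mul a b] with ω ha hb hab
    simpa [hab] using mul_nonneg ha hb

theorem aabs_eq_abs (ξ : Ω →ₘ[μ] ℝ) : aabs ξ = |ξ| := rfl

theorem nonneg_of_mem_Lspos {ε : Ω →ₘ[μ] ℝ} (hε : ε ∈ Lspos μ) : 0 ≤ ε :=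
  nonneg_iff_ae_nonneg.2 <| (show ∀ᵐ ω ∂μ, 0 < ε ω from hε).mono fun _ h => h.le

theorem exists_nonneg_mul_eq_one_of_mem_Lspos {ε : Ω →ₘ[μ] ℝ} (hε : ε ∈ Lspos μ) :
    ∃ ε' : Ω →ₘ[μ] ℝ, 0 ≤ ε' ∧ ε * ε' = 1 := by
  let ε' : Ω →ₘ[μ] ℝ := AEEqFun.mk (fun ω => (ε ω)⁻¹) ε.aemeasurable.inv.aestronglyMeasurable
  have hε' : ε' =ᵐ[μ] fun ω => (ε ω)⁻¹ := AEEqFun.coeFn_mk _ _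
  refine ⟨ε', nonneg_iff_ae_nonneg.2 ?_, AEEqFun.ext ?_⟩
  · filter_upwards [hε, hε'] with ω hpos hinv
    simpa [hinv] using hpos.le
  · filter_upwards [hε, hε', AEEqFun.coeFn_mul ε ε', AEEqFun.coeFn_one (μ := μ) (β := ℝ)]
      with ω hpos hinv hmul h1
    simp [hmul, hinv, h1, hpos.ne']

theorem IsL0Seminorm.le_mul_of_mem_smul {E : Type*} [AddCommGroup E] [Module (Ω →ₘ[μ] ℝ) E]
    {p : E → Ω →ₘ[μ] ℝ} (hp : IsL0Seminorm μ p) {U : Set E} {ε : Ω →ₘ[μ] ℝ}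
    (hU : ∀ z ∈ U, p z ≤ ε) {ξ : Ω →ₘ[μ] ℝ} (hξ : 0 ≤ ξ) {x : E} (hx : x ∈ ξ • U) :
    p x ≤ ξ * ε := by
  obtain ⟨u, hu, rfl⟩ := hx
  rw [hp.homog, aabs_eq_abs, abs_of_nonneg hξ]
  exact mul_le_mul_of_nonneg_left (hU u hu) hξ

end PaperL0

theorem statement3_general
    {Ω : Type*} [MeasurableSpace Ω] (P : Measure Ω)
    {E : Type*} [AddCommGroup E] [Module (Ω →ₘ[P] ℝ) E]
    (Ps : Set (E → Ω →ₘ[P] ℝ)) (hP : ∀ p ∈ Ps, IsL0Seminorm P p)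
    (ε : Ω →ₘ[P] ℝ) (hε : ε ∈ Lspos P)
    (g : E → Ω →ₘ[P] ℝ)
    (hg : ∀ x : E,
      IsGLB {ξ : Ω →ₘ[P] ℝ | ξ ∈ Lpos P ∧ x ∈ ξ • {z : E | ∀ p ∈ Ps, p z ≤ ε}} (g x)) :
    {x : E | g x ≤ 1} = {z : E | ∀ p ∈ Ps, p z ≤ ε} := by
  set U := {z : E | ∀ p ∈ Ps, p z ≤ ε}
  obtain ⟨ε', hε', hεε'⟩ := exists_nonneg_mul_eq_one_of_mem_Lspos hε
  have hε0 : 0 ≤ ε := nonneg_of_mem_Lspos hε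
  ext x
  constructor
  · intro hx p hp
    have hlb : p x * ε' ∈ lowerBounds {ξ | ξ ∈ Lpos P ∧ x ∈ ξ • U} :=
      fun ξ ⟨hξ, hxξ⟩ => (mul_le_iff_le_mul_of_mul_eq_one hε0 hε' hεε').2 <|
        (hP p hp).le_mul_of_mem_smul (fun z (hz : z ∈ U) => hz p hp) hξ hxξ
    exact ((mul_le_iff_le_mul_of_mul_eq_one hε0 hε' hεε').1 (((hg x).2 hlb).trans hx)).trans_eq
      (one_mul ε)
  · intro hx
    exact (hg x).1 ⟨zero_le_one (α := Ω →ₘ[P] ℝ), x, hx, one_smul _ _⟩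

/-- Proposition 2.6(2): for a finite family Ps of L⁰-seminorms and ε ∈ L⁰₊₊, with
U = {x : p x ≤ ε for all p ∈ Ps}, the random gauge function g = p_U of U satisfies
{x : g x ≤ 1} = U. -/
theorem statement3
    {Ω : Type*} [MeasurableSpace Ω] (P : Measure Ω) [IsProbabilityMeasure P]
    {E : Type*} [AddCommGroup E] [Module (Ω →ₘ[P] ℝ) E]
    (Ps : Set (E → Ω →ₘ[P] ℝ)) (hfin : Ps.Finite) (hP : ∀ p ∈ Ps, IsL0Seminorm P p)
    (ε : Ω →ₘ[P] ℝ) (hε : ε ∈ Lspos P)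
    (g : E → Ω →ₘ[P] ℝ)
    (hg : ∀ x : E,
      IsGLB {ξ : Ω →ₘ[P] ℝ | ξ ∈ Lpos P ∧ x ∈ ξ • {z : E | ∀ p ∈ Ps, p z ≤ ε}} (g x)) :
    {x : E | g x ≤ 1} = {z : E | ∀ p ∈ Ps, p z ≤ ε} :=
  statement3_general P Ps hP ε hε g hg
end
end

section
/- In the counterexample setting, M is a proper 𝒯-closed L⁰-submodule of E = L⁰: the closure of M in the topology 𝒯 equals M, and M ≠ L⁰; in particular, 𝒯 is not the trivial topology {∅, E}. -/
noncomputable section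

open Set Pointwise Filter Topology

namespace PaperSeq

/-- In the counterexample setting, Ω = ℕ (the positive integers), 𝔉 = 2^Ω and
P({j}) = 2^{-j}; since every singleton has positive probability, L⁰(𝔉, ℝ) is identified
with the ring `ℕ → ℝ` of all real sequences with pointwise operations and pointwise order. -/
abbrev Seq : Type := ℕ → ℝ

/-- `Ĩ_{{j}}`, the indicator of the singleton {j}. -/
def e (j : ℕ) : Seq := Set.indicator {j} (fun _ => (1 : ℝ))

/-- `M = span_{L⁰}{Ĩ_{{j}} : j ∈ Ω}`, the L⁰-submodule of E = L⁰ generated by the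
indicators of singletons. -/
def Mfin : Submodule Seq Seq := Submodule.span Seq (Set.range e)

/-- `L⁰₊₊ = {ξ : ξ(j) > 0 for all j}`. -/
def Lpp : Set Seq := {ξ | ∀ j, 0 < ξ j}

/-- `B_ε = {x ∈ L⁰ : |x| ≤ ε}`. -/
def Bball (ε : Seq) : Set Seq := {x | ∀ j, |x j| ≤ ε j}

/-- `U_ε = M + B_ε`. -/
def Uball (ε : Seq) : Set Seq := (Mfin : Set Seq) + Bball ε

/-- An L⁰-seminorm on an L⁰-module F, in the counterexample setting where L⁰ = ℕ → ℝ. -/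
structure IsSeqSeminorm {F : Type*} [AddCommGroup F] [Module Seq F] (p : F → Seq) : Prop where
  nonneg : ∀ x, 0 ≤ p x
  homog : ∀ (ξ : Seq) (x : F), p (ξ • x) = (fun j => |ξ j|) * p x
  triangle : ∀ x y, p (x + y) ≤ p x + p y

end PaperSeq

open PaperSeq

lemma mem_Mfin_iff (x : Seq) : x ∈ Mfin ↔ (Function.support x).Finite := by
  constructor
  · intro hx
    induction hx using Submodule.span_induction with
    | mem z hz =>
      obtain ⟨j, rfl⟩ := hz
      apply Set.Finite.subset (Set.finite_singleton j)
      intro k hk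
      by_contra hkj
      simp [e, Function.mem_support, Set.indicator_apply, hkj] at hk
    | zero => simp
    | add a b _ _ ha hb =>
      exact (ha.union hb).subset (Function.support_add _ _)
    | smul ξ a _ ha =>
      refine ha.subset ?_
      intro k hk
      simp only [Function.mem_support] at hk ⊢
      intro h
      apply hk
      show ξ k * a k = 0
      simp [h]
  · intro hx
    have : x = ∑ j ∈ hx.toFinset, x • e j := by
      funext k
      rw [Finset.sum_apply]
      have : ∀ j, (x • e j) k = if k = j then x k else 0 := by
        intro j
        show x k * e j k = _
        by_cases h : k = j <;> simp [e, Set.indicator_apply, h]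
      simp only [this]
      rw [Finset.sum_ite_eq hx.toFinset k (fun _ => x k)]
      by_cases h : x k = 0 <;> simp [h, Set.Finite.mem_toFinset, Function.mem_support]
    rw [this]
    exact Submodule.sum_mem _ fun j _ =>
      Submodule.smul_mem _ _ (Submodule.subset_span ⟨j, rfl⟩)

/-- M is a proper 𝒯-closed L⁰-submodule of E = L⁰; in particular 𝒯 is not the trivial
topology {∅, E} (in Mathlib the trivial/indiscrete topology is ⊤). -/
theorem statement8 (T : TopologicalSpace Seq)
    (hT : ∀ V : Set Seq, IsOpen[T] V ↔ ∀ y ∈ V, ∃ ε ∈ Lpp, ∀ u ∈ Uball ε, y + u ∈ V) :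
    @closure Seq T (Mfin : Set Seq) = (Mfin : Set Seq) ∧
    (Mfin : Set Seq) ≠ Set.univ ∧
    T ≠ (⊤ : TopologicalSpace Seq) := by
  letI := T
  have hopen : IsOpen ((Mfin : Set Seq)ᶜ) := by
    rw [hT]
    intro y hy
    refine ⟨fun j => if y j = 0 then 1 else |y j| / 2, fun j => ?_, ?_⟩
    · by_cases h : y j = 0 <;> simp [h, abs_pos]
    · rintro u ⟨m, hm, b, hb, rfl⟩ hmem
      apply hy
      have h1 : y + (m + b) - m ∈ Mfin := (Mfin.sub_mem hmem hm)
      have h2 : y + b ∈ Mfin := by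
        have : y + (m + b) - m = y + b := by ring
        rwa [this] at h1
      rw [mem_Mfin_iff] at h2
      rw [SetLike.mem_coe, mem_Mfin_iff]
      refine h2.subset fun k hk => ?_
      simp only [Function.mem_support] at hk ⊢
      intro h
      have hbk := hb k
      simp only [if_neg hk] at hbk
      have : y k + b k = 0 := h
      have : |b k| = |y k| := by
        have : b k = -y k := by linarith [h]
        simp [this]
      rw [this] at hbk
      have : 0 < |y k| := abs_pos.mpr hk
      linarith
  have hclosed : IsClosed (Mfin : Set Seq) := ⟨hopen⟩
  refine ⟨hclosed.closure_eq, ?_, ?_⟩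
  · intro h
    have h1 : (fun _ => (1:ℝ)) ∈ (Mfin : Set Seq) := h ▸ Set.mem_univ _
    rw [SetLike.mem_coe, mem_Mfin_iff] at h1
    have : Function.support (fun _ : ℕ => (1:ℝ)) = Set.univ := by
      ext k; simp
    rw [this] at h1
    exact Set.infinite_univ h1
  · intro h
    have hopen' : IsOpen[⊤] ((Mfin : Set Seq)ᶜ) := h ▸ hopen
    rw [TopologicalSpace.isOpen_top_iff] at hopen'
    rcases hopen' with h0 | h0
    · have : (0:Seq) ∈ (Mfin : Set Seq) := Mfin.zero_mem
      have hne : ((Mfin : Set Seq)ᶜ).Nonempty := by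
        refine ⟨fun _ => 1, ?_⟩
        simp only [Set.mem_compl_iff, SetLike.mem_coe, mem_Mfin_iff]
        intro h1
        have : Function.support (fun _ : ℕ => (1:ℝ)) = Set.univ := by ext k; simp
        rw [this] at h1
        exact Set.infinite_univ h1
      rw [h0] at hne
      exact hne.ne_empty rfl
    · have : (0:Seq) ∈ ((Mfin : Set Seq)ᶜ) := h0 ▸ Set.mem_univ _
      exact this Mfin.zero_mem
end
end
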